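/- arXiv:2007.13470 — 2 statements merged into one kernel-verified Lean document; each statement's English description precedes it below -/
import Mathlib

section
/- The stereographic projection of the n-sphere from the north pole to the tangent hyperplane at the south pole is conformal: its differential at each point is a similarity (scalar multiple of a linear isometry) from the tangent space of the sphere to the hyperplane. -/
open scoped RealInnerProductSpace Topology

/-!
Stereographic projection from `N` is the central projection
`σ x = N + (2 / (1 - ⟪N, x⟫)) • (x - N)`, so its differential at `P` is
`v ↦ λ • v + μ ⟪N, v⟫ • (P - N)` with `λ = 2 / (1 - ⟪N, P⟫)` and `μ = λ / (1 - ⟪N, P⟫)`.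
For `P` and `N` on the unit sphere, `‖P - N‖² = 2 (1 - ⟪N, P⟫)`, and for `v` tangent at `P`,
`⟪P - N, v⟫ = -⟪N, v⟫`; with these two identities all terms involving `P - N` cancel in
`⟪dσ v, dσ w⟫`, which leaves `λ² ⟪v, w⟫`.
-/

section
variable {E : Type*} [NormedAddCommGroup E] [InnerProductSpace ℝ E]

/-- The point where the line through `N` and `x` meets the hyperplane `⟪N, y⟫ = -1`; for a unit
vector `N` this is the tangent hyperplane of the unit sphere at `-N`. -/
noncomputable def stereoToTangent (N x : E) : E := N + (2 / (1 - ⟪N, x⟫)) • (x - N)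

theorem hasFDerivAt_stereoToTangent {N x : E} (hx : ⟪N, x⟫ ≠ 1) :
    HasFDerivAt (stereoToTangent N)
      ((2 / (1 - ⟪N, x⟫)) • ContinuousLinearMap.id ℝ E +
        ((2 / (1 - ⟪N, x⟫) ^ 2) • innerSL ℝ N).smulRight (x - N)) x := by
  have hscalar : HasDerivAt (fun t : ℝ => 2 / (1 - t)) (2 / (1 - ⟪N, x⟫) ^ 2) ⟪N, x⟫ := by
    have := (hasDerivAt_const ⟪N, x⟫ (2 : ℝ)).fun_div ((hasDerivAt_id ⟪N, x⟫).const_sub 1)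
      (sub_ne_zero.2 hx.symm)
    simpa using this
  have hfactor := hscalar.comp_hasFDerivAt x (innerSL ℝ N).hasFDerivAt
  exact (hfactor.smul ((hasFDerivAt_id x).sub_const N)).const_add N

theorem fderiv_stereoToTangent_apply {N x : E} (hx : ⟪N, x⟫ ≠ 1) (v : E) :
    fderiv ℝ (stereoToTangent N) x v =
      (2 / (1 - ⟪N, x⟫)) • v + (2 / (1 - ⟪N, x⟫) ^ 2 * ⟪N, v⟫) • (x - N) := by
  simp [(hasFDerivAt_stereoToTangent hx).fderiv]

theorem inner_fderiv_stereoToTangent {N P : E} (hN : ‖N‖ = 1) (hP : ‖P‖ = 1)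
    (hNP : ⟪N, P⟫ ≠ 1) {v w : E} (hv : ⟪v, P⟫ = 0) (hw : ⟪w, P⟫ = 0) :
    ⟪fderiv ℝ (stereoToTangent N) P v, fderiv ℝ (stereoToTangent N) P w⟫ =
      (2 / (1 - ⟪N, P⟫)) ^ 2 * ⟪v, w⟫ := by
  have hsub : 1 - ⟪N, P⟫ ≠ 0 := sub_ne_zero.2 hNP.symm
  have hdist : ⟪P - N, P - N⟫ = 2 * (1 - ⟪N, P⟫) := by
    rw [real_inner_self_eq_norm_sq, norm_sub_sq_real, hN, hP, real_inner_comm]; ring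
  have hv' : ⟪P - N, v⟫ = -⟪N, v⟫ := by rw [inner_sub_left, real_inner_comm, hv]; ring
  have hw' : ⟪P - N, w⟫ = -⟪N, w⟫ := by rw [inner_sub_left, real_inner_comm, hw]; ring
  simp only [fderiv_stereoToTangent_apply hNP, inner_add_left, inner_add_right,
    real_inner_smul_left, real_inner_smul_right, hdist, hv', hw', real_inner_comm (P - N)]
  field_simp
  ring

end

theorem stereoToTangent_single_one {ι : Type*} [Fintype ι] [DecidableEq ι] (i : ι)
    {x : EuclideanSpace ℝ ι} (hx : x i ≠ 1) :
    stereoToTangent (EuclideanSpace.single i 1) x =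
      WithLp.toLp 2 (fun j => if j = i then -1 else 2 * x j / (1 - x i)) := by
  have hsub : 1 - x i ≠ 0 := sub_ne_zero.2 hx.symm
  ext j
  simp only [stereoToTangent, EuclideanSpace.inner_single_left, PiLp.add_apply, PiLp.smul_apply,
    PiLp.sub_apply, PiLp.single_apply, smul_eq_mul, map_one, one_mul]
  split_ifs with hj
  · subst hj
    field_simp
    ring
  · ring

/-- The stereographic projection of the unit n-sphere from the north pole
`N = (0,…,0,1)` to the tangent hyperplane at the south pole `−N` is conformal: at every
point `P ≠ N` of the sphere it is differentiable and its differential restricted to the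
tangent space `{v : ⟪v,P⟫ = 0}` of the sphere is a similarity (a scalar multiple of a
linear isometry into the hyperplane's direction). -/
theorem stereographic_conformal (n : ℕ)
    (N : EuclideanSpace ℝ (Fin (n + 1))) (hN : N = WithLp.toLp 2 (fun i => if i = Fin.last n then 1 else 0))
    (σ : EuclideanSpace ℝ (Fin (n + 1)) → EuclideanSpace ℝ (Fin (n + 1)))
    (hσ : ∀ x, σ x = WithLp.toLp 2 (fun i =>
      if i = Fin.last n then -1 else 2 * x i / (1 - x (Fin.last n))))
    (P : EuclideanSpace ℝ (Fin (n + 1))) (hP : ‖P‖ = 1) (hPN : P ≠ N) :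
    DifferentiableAt ℝ σ P ∧
      ∃ c : ℝ, 0 < c ∧
        ∀ v w : EuclideanSpace ℝ (Fin (n + 1)), ⟪v, P⟫ = 0 → ⟪w, P⟫ = 0 →
          ⟪fderiv ℝ σ P v, fderiv ℝ σ P w⟫ = c ^ 2 * ⟪v, w⟫ := by
  have hN_single : N = EuclideanSpace.single (Fin.last n) 1 := by
    rw [hN]
    ext i
    simp [PiLp.single_apply]
  have hN_norm : ‖N‖ = 1 := by simp [hN_single]
  have hNP : ⟪N, P⟫ < 1 := (inner_lt_one_iff_real_of_norm_eq_one hN_norm hP).2 hPN.symm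
  have hσ_eq : σ =ᶠ[𝓝 P] stereoToTangent N := by
    filter_upwards [(innerSL ℝ N).continuous.continuousAt.eventually_ne hNP.ne] with x hx
    rw [innerSL_apply_apply, hN_single, EuclideanSpace.inner_single_left] at hx
    rw [hσ, hN_single, stereoToTangent_single_one _ (by simpa using hx)]
  refine ⟨(hasFDerivAt_stereoToTangent hNP.ne).differentiableAt.congr_of_eventuallyEq hσ_eq,
    2 / (1 - ⟪N, P⟫), div_pos two_pos (sub_pos.2 hNP), fun v w hv hw => ?_⟩
  rw [hσ_eq.fderiv_eq]
  exact inner_fderiv_stereoToTangent hN_norm hP hNP.ne hv hw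
end

section
/- Spherical inversion is conformal: at any point A ≠ Z, the differential of ι is a similarity, with similarity ratio r²/|A−Z|². -/
open scoped RealInnerProductSpace
open EuclideanGeometry

section ScaledIsometry

variable {E F : Type*} [NormedAddCommGroup E] [InnerProductSpace ℝ E]
  [NormedAddCommGroup F] [InnerProductSpace ℝ F]

theorem LinearIsometryEquiv.norm_smul_toContinuousLinearMap_apply (k : ℝ) (L : E ≃ₗᵢ[ℝ] F)
    (v : E) : ‖(k • (L : E →L[ℝ] F)) v‖ = |k| * ‖v‖ := by
  simp only [_root_.smul_apply, ContinuousLinearEquiv.coe_coe,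
    LinearIsometryEquiv.coe_toContinuousLinearEquiv, norm_smul, Real.norm_eq_abs, L.norm_map]

theorem LinearIsometryEquiv.inner_smul_toContinuousLinearMap_apply (k : ℝ) (L : E ≃ₗᵢ[ℝ] F)
    (v w : E) : ⟪(k • (L : E →L[ℝ] F)) v, (k • (L : E →L[ℝ] F)) w⟫ = k ^ 2 * ⟪v, w⟫ := by
  simp only [_root_.smul_apply, ContinuousLinearEquiv.coe_coe,
    LinearIsometryEquiv.coe_toContinuousLinearEquiv, real_inner_smul_left, real_inner_smul_right,
    L.inner_map_map]
  ring

end ScaledIsometry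

namespace EuclideanGeometry

variable {E : Type*} [NormedAddCommGroup E] [InnerProductSpace ℝ E]

theorem inversion_eq_add_smul (c : E) (R : ℝ) :
    inversion c R = fun x => c + (R ^ 2 / ‖x - c‖ ^ 2) • (x - c) := by
  funext x
  rw [inversion, dist_eq_norm, div_pow, vsub_eq_sub, vadd_eq_add, add_comm]

theorem fderiv_inversion {c x : E} (R : ℝ) (hx : x ≠ c) :
    fderiv ℝ (inversion c R) x =
      (R ^ 2 / ‖x - c‖ ^ 2) • ((ℝ ∙ (x - c))ᗮ.reflection : E →L[ℝ] E) := by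
  rw [(hasFDerivAt_inversion hx).fderiv, dist_eq_norm, div_pow]

end EuclideanGeometry

theorem inversion_conformal_general {n : ℕ} (Z : EuclideanSpace ℝ (Fin n)) (r : ℝ)
    (A : EuclideanSpace ℝ (Fin n)) (hA : A ≠ Z) :
    DifferentiableAt ℝ
        (fun B : EuclideanSpace ℝ (Fin n) => Z + (r ^ 2 / ‖B - Z‖ ^ 2) • (B - Z)) A ∧
      (∀ v : EuclideanSpace ℝ (Fin n),
        ‖fderiv ℝ (fun B : EuclideanSpace ℝ (Fin n) =>
            Z + (r ^ 2 / ‖B - Z‖ ^ 2) • (B - Z)) A v‖ = r ^ 2 / ‖A - Z‖ ^ 2 * ‖v‖) ∧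
      ∀ v w : EuclideanSpace ℝ (Fin n),
        ⟪fderiv ℝ (fun B : EuclideanSpace ℝ (Fin n) =>
            Z + (r ^ 2 / ‖B - Z‖ ^ 2) • (B - Z)) A v,
          fderiv ℝ (fun B : EuclideanSpace ℝ (Fin n) =>
            Z + (r ^ 2 / ‖B - Z‖ ^ 2) • (B - Z)) A w⟫
          = (r ^ 2 / ‖A - Z‖ ^ 2) ^ 2 * ⟪v, w⟫ := by
  rw [← inversion_eq_add_smul, fderiv_inversion r hA]
  refine ⟨(hasFDerivAt_inversion hA).differentiableAt, fun v => ?_, fun v w => ?_⟩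
  · rw [LinearIsometryEquiv.norm_smul_toContinuousLinearMap_apply,
      abs_of_nonneg (by positivity)]
  · exact LinearIsometryEquiv.inner_smul_toContinuousLinearMap_apply _ _ v w

/-- Spherical inversion is conformal: at any point `A ≠ Z` it is differentiable and its
differential is a similarity with similarity ratio `r²/|A−Z|²`. -/
theorem inversion_conformal {n : ℕ} (Z : EuclideanSpace ℝ (Fin n)) (r : ℝ) (hr : 0 < r)
    (A : EuclideanSpace ℝ (Fin n)) (hA : A ≠ Z) :
    DifferentiableAt ℝ
        (fun B : EuclideanSpace ℝ (Fin n) => Z + (r ^ 2 / ‖B - Z‖ ^ 2) • (B - Z)) A ∧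
      (∀ v : EuclideanSpace ℝ (Fin n),
        ‖fderiv ℝ (fun B : EuclideanSpace ℝ (Fin n) =>
            Z + (r ^ 2 / ‖B - Z‖ ^ 2) • (B - Z)) A v‖ = r ^ 2 / ‖A - Z‖ ^ 2 * ‖v‖) ∧
      ∀ v w : EuclideanSpace ℝ (Fin n),
        ⟪fderiv ℝ (fun B : EuclideanSpace ℝ (Fin n) =>
            Z + (r ^ 2 / ‖B - Z‖ ^ 2) • (B - Z)) A v,
          fderiv ℝ (fun B : EuclideanSpace ℝ (Fin n) =>
            Z + (r ^ 2 / ‖B - Z‖ ^ 2) • (B - Z)) A w⟫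
          = (r ^ 2 / ‖A - Z‖ ^ 2) ^ 2 * ⟪v, w⟫ :=
  inversion_conformal_general Z r A hA
end
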